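/- arXiv:2303.02334 — 8 statements merged into one kernel-verified Lean document; each statement's English description precedes it below -/
import Mathlib

section
/- Assume n_i > 0 and O_i ≠ 0 for all i = 1,…,N, assume D_i = O_i + w_i ≠ 0 for all i, and assume ⟨V⟩_α ≠ 0 and ⟨V⟩_α + w ≠ 0. Then the residual vector ε_α = ⟨φ(D)⟩_α − ‖⟨V⟩_α‖ · φ(⟨V⟩_α + w) satisfies ‖ε_α‖ ≤ 2‖w‖²/‖⟨V⟩_α‖ + Σ_{i=1}^N α_i (π̃_i + √(Q_{i,n_iα})) + 2 Σ_{i=1}^N α_i ρ_i (π̃_α + ρ_i + 2π̃_i + √(Q_{i,n_iα})). -/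
/-!
With `P` the orthogonal projection onto `φ(⟨V⟩_α)ᗮ`, the residual splits as
`Σ αᵢ (φ(Dᵢ) - φ(Oᵢ) - nᵢ⁻¹ P wᵢ) + Σ αᵢ (φ(Oᵢ) - ⟨V⟩_α) + (⟨V⟩_α + P w - ‖⟨V⟩_α‖ φ(⟨V⟩_α + w))`.

The derivative of `φ` at `a` is `‖a‖⁻¹ P_{φ(a)}`, and the second-order remainder is at most
`‖φ(a + h) - φ(a)‖ ‖h‖ / ‖a‖ ≤ 2 ‖h‖² / ‖a‖²`; the last term is `‖⟨V⟩_α‖` times such a remainder.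
The middle terms pass through `Oᵢ / nᵢ`: `‖φ(Oᵢ) - Oᵢ / nᵢ‖ = π̃ᵢ`, and `Oᵢ / nᵢ - ⟨V⟩_α = Σⱼ cⱼ Vⱼ`
with `Σⱼ cⱼ = 0`, so its squared norm is `-½ ΣΣ cⱼ cⱼ' ‖Vⱼ - Vⱼ'‖² ≤ Q_{i,nᵢα}`, chords being
shorter than arcs. The first terms are the remainder of `φ` at `Oᵢ`, plus the cost of replacing
`‖Oᵢ‖⁻¹ P_{φ(Oᵢ)}` by `nᵢ⁻¹ P`, which is controlled by `π̃ᵢ` and by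
`‖φ(Oᵢ) - φ(⟨V⟩_α)‖ ≤ π̃ᵢ + √Q_{i,nᵢα} + π̃_α`.
-/

open Finset
open scoped BigOperators RealInnerProductSpace

noncomputable def phi (x : EuclideanSpace ℝ (Fin 3)) : EuclideanSpace ℝ (Fin 3) := ‖x‖⁻¹ • x

open NormedSpace InnerProductGeometry

section InnerProductSpace

variable {F : Type*} [NormedAddCommGroup F] [InnerProductSpace ℝ F]

noncomputable def perpProj (u : F) : F →ₗ[ℝ] F := LinearMap.id - (innerₗ F u).smulRight u

@[simp]
lemma perpProj_apply (u h : F) : perpProj u h = h - ⟪u, h⟫ • u := rfl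

lemma perpProj_self {u : F} (hu : ‖u‖ = 1) : perpProj u u = 0 := by
  simp [hu]

lemma norm_perpProj_le {u : F} (hu : ‖u‖ = 1) (h : F) : ‖perpProj u h‖ ≤ ‖h‖ := by
  rw [← sq_le_sq₀ (norm_nonneg _) (norm_nonneg _), perpProj_apply, norm_sub_sq_real,
    real_inner_smul_right, norm_smul, Real.norm_eq_abs, hu, mul_one, sq_abs, real_inner_comm]
  nlinarith [sq_nonneg ⟪u, h⟫]

lemma norm_perpProj_sub_perpProj_le {u v : F} (hu : ‖u‖ = 1) (hv : ‖v‖ = 1) (h : F) :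
    ‖perpProj u h - perpProj v h‖ ≤ 2 * ‖u - v‖ * ‖h‖ := by
  have hsplit : perpProj u h - perpProj v h = ⟪v, h⟫ • (v - u) + ⟪v - u, h⟫ • u := by
    simp only [perpProj_apply, inner_sub_left]
    module
  calc ‖perpProj u h - perpProj v h‖ ≤ |⟪v, h⟫| * ‖v - u‖ + |⟪v - u, h⟫| * ‖u‖ := by
        rw [hsplit, ← Real.norm_eq_abs, ← Real.norm_eq_abs, ← norm_smul, ← norm_smul]
        exact norm_add_le _ _
    _ ≤ (‖v‖ * ‖h‖) * ‖v - u‖ + (‖v - u‖ * ‖h‖) * ‖u‖ := by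
        gcongr <;> exact abs_real_inner_le_norm _ _
    _ = 2 * ‖u - v‖ * ‖h‖ := by rw [hu, hv, norm_sub_rev v u]; ring

lemma norm_sub_sub_smul_perpProj_le {u v : F} (hu : ‖u‖ = 1) (hv : ‖v‖ = 1) {r : ℝ}
    (hr : 0 ≤ r) : ‖v - u - r • perpProj u v‖ ≤ ‖v - u‖ * ‖r • v - u‖ := by
  set c := ⟪u, v⟫ with hc
  have hvu : ‖v - u‖ ^ 2 = 2 - 2 * c := by
    rw [norm_sub_sq_real, hu, hv, real_inner_comm]; ring
  have hrvu : ‖r • v - u‖ ^ 2 = r ^ 2 + 1 - 2 * r * c := by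
    rw [norm_sub_sq_real, norm_smul, real_inner_smul_left, hu, hv, real_inner_comm,
      Real.norm_eq_abs, mul_one, sq_abs]; ring
  have hX : ‖v - u - r • perpProj u v‖ ^ 2
      = (1 - r) ^ 2 + (r * c - 1) ^ 2 + 2 * (1 - r) * (r * c - 1) * c := by
    have : v - u - r • perpProj u v = (1 - r) • v + (r * c - 1) • u := by
      rw [perpProj_apply, ← hc]; module
    rw [this, norm_add_sq_real, norm_smul, norm_smul, real_inner_smul_left, real_inner_smul_right,
      hu, hv, real_inner_comm, ← hc, Real.norm_eq_abs, Real.norm_eq_abs, mul_pow, mul_pow, sq_abs,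
      sq_abs]
    ring
  rw [← sq_le_sq₀ (norm_nonneg _) (by positivity), mul_pow, hX, hvu, hrvu]
  -- the two sides differ by `r (2 + r) (1 - c)²`
  nlinarith [mul_nonneg (mul_nonneg hr (by linarith : (0 : ℝ) ≤ 2 + r)) (sq_nonneg (1 - c))]

lemma norm_normalize_sub_normalize_le {x : F} (hx : x ≠ 0) (y : F) :
    ‖normalize y - normalize x‖ ≤ 2 * ‖y - x‖ / ‖x‖ := by
  have hx' : 0 < ‖x‖ := norm_pos_iff.2 hx
  rcases eq_or_ne y 0 with rfl | hy
  · rw [normalize_zero_eq_zero, zero_sub, norm_neg, norm_normalize hx, zero_sub, norm_neg,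
      mul_div_assoc, div_self hx'.ne']
    norm_num
  have hsplit : normalize y - normalize x = ‖x‖⁻¹ • ((y - x) + (‖x‖ - ‖y‖) • normalize y) := by
    simp only [NormedSpace.normalize]
    match_scalars <;> field_simp [norm_ne_zero_iff.2 hy]
    ring
  rw [hsplit, norm_smul, norm_inv, norm_norm, inv_mul_eq_div, two_mul]
  gcongr
  calc ‖(y - x) + (‖x‖ - ‖y‖) • normalize y‖ ≤ ‖y - x‖ + |‖x‖ - ‖y‖| * 1 := by
        rw [← norm_normalize hy, ← Real.norm_eq_abs, ← norm_smul]; exact norm_add_le _ _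
    _ ≤ ‖y - x‖ + ‖y - x‖ := by
        rw [mul_one, norm_sub_rev y x]
        gcongr
        exact abs_norm_sub_norm_le _ _

lemma norm_normalize_add_sub_sub_le {a : F} (h : F) (ha : a ≠ 0) (hah : a + h ≠ 0) :
    ‖normalize (a + h) - normalize a - ‖a‖⁻¹ • perpProj (normalize a) h‖
      ≤ 2 * ‖h‖ ^ 2 / ‖a‖ ^ 2 := by
  have hs : 0 < ‖a‖ := norm_pos_iff.2 ha
  set r := ‖a + h‖ / ‖a‖
  have hh : ‖a‖⁻¹ • h = r • normalize (a + h) - normalize a := by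
    have hrv : r • normalize (a + h) = ‖a‖⁻¹ • (a + h) := by
      rw [NormedSpace.normalize, smul_smul]
      congr 1
      simp only [r]
      field_simp [norm_ne_zero_iff.2 hah]
    rw [hrv, NormedSpace.normalize, ← smul_sub, add_sub_cancel_left]
  have hP : ‖a‖⁻¹ • perpProj (normalize a) h = r • perpProj (normalize a) (normalize (a + h)) := by
    rw [← map_smul, hh, map_sub, map_smul, perpProj_self (norm_normalize ha), sub_zero]
  calc _ = ‖normalize (a + h) - normalize a - r • perpProj (normalize a) (normalize (a + h))‖ := by
        rw [hP]
    _ ≤ ‖normalize (a + h) - normalize a‖ * ‖r • normalize (a + h) - normalize a‖ :=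
        norm_sub_sub_smul_perpProj_le (norm_normalize ha) (norm_normalize hah) (by positivity)
    _ ≤ (2 * ‖h‖ / ‖a‖) * (‖h‖ / ‖a‖) := by
        rw [← hh, norm_smul, norm_inv, norm_norm, inv_mul_eq_div]
        gcongr
        simpa using norm_normalize_sub_normalize_le ha (a + h)
    _ = 2 * ‖h‖ ^ 2 / ‖a‖ ^ 2 := by ring

lemma norm_normalize_sub_inv_smul {x : F} (hx : x ≠ 0) {n : ℝ} (hxn : ‖x‖ ≤ n) :
    ‖normalize x - n⁻¹ • x‖ = 1 - ‖x‖ / n := by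
  have hs : 0 < ‖x‖ := norm_pos_iff.2 hx
  have hn : 0 < n := hs.trans_le hxn
  rw [NormedSpace.normalize, ← sub_smul, norm_smul, Real.norm_eq_abs,
    abs_of_nonneg (sub_nonneg.2 (inv_anti₀ hs hxn))]
  field_simp

lemma norm_add_perpProj_sub_smul_normalize_le {a : F} (h : F) (ha : a ≠ 0) (hah : a + h ≠ 0) :
    ‖a + perpProj (normalize a) h - ‖a‖ • normalize (a + h)‖ ≤ 2 * ‖h‖ ^ 2 / ‖a‖ := by
  have hs : 0 < ‖a‖ := norm_pos_iff.2 ha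
  have hsplit : a + perpProj (normalize a) h - ‖a‖ • normalize (a + h)
      = -(‖a‖ • (normalize (a + h) - normalize a - ‖a‖⁻¹ • perpProj (normalize a) h)) := by
    rw [smul_sub, smul_sub, norm_smul_normalize, smul_smul, mul_inv_cancel₀ hs.ne', one_smul]
    abel
  rw [hsplit, norm_neg, norm_smul, norm_norm]
  calc ‖a‖ * ‖normalize (a + h) - normalize a - ‖a‖⁻¹ • perpProj (normalize a) h‖
      ≤ ‖a‖ * (2 * ‖h‖ ^ 2 / ‖a‖ ^ 2) := by gcongr; exact norm_normalize_add_sub_sub_le h ha hah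
    _ = 2 * ‖h‖ ^ 2 / ‖a‖ := by field_simp

lemma norm_normalize_add_sub_sub_smul_perpProj_le {O w u : F} {n : ℝ} (hO : O ≠ 0)
    (hOw : O + w ≠ 0) (hOn : ‖O‖ ≤ n) (hu : ‖u‖ = 1) :
    ‖normalize (O + w) - normalize O - n⁻¹ • perpProj u w‖
      ≤ 2 * (‖w‖ / ‖O‖) * (‖w‖ / ‖O‖ + (1 - ‖O‖ / n) + ‖normalize O - u‖) := by
  have hs : 0 < ‖O‖ := norm_pos_iff.2 hO
  have hn : 0 < n := hs.trans_le hOn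
  have hgap : 0 ≤ ‖O‖⁻¹ - n⁻¹ := sub_nonneg.2 (inv_anti₀ hs hOn)
  set x := normalize O
  have hsplit : normalize (O + w) - x - n⁻¹ • perpProj u w
      = (normalize (O + w) - x - ‖O‖⁻¹ • perpProj x w) + (‖O‖⁻¹ - n⁻¹) • perpProj x w
        + n⁻¹ • (perpProj x w - perpProj u w) := by module
  have hrem := norm_normalize_add_sub_sub_le w hO hOw
  have hgap_term : ‖(‖O‖⁻¹ - n⁻¹) • perpProj x w‖ ≤ (‖O‖⁻¹ - n⁻¹) * ‖w‖ := by
    rw [norm_smul, Real.norm_of_nonneg hgap]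
    gcongr
    exact norm_perpProj_le (norm_normalize hO) w
  have hturn : ‖n⁻¹ • (perpProj x w - perpProj u w)‖ ≤ n⁻¹ * (2 * ‖x - u‖ * ‖w‖) := by
    rw [norm_smul, norm_inv, Real.norm_of_nonneg hn.le]
    gcongr
    exact norm_perpProj_sub_perpProj_le (norm_normalize hO) hu w
  have hρ : 0 ≤ ‖w‖ / ‖O‖ := by positivity
  have hOn' : ‖O‖ / n ≤ 1 := (div_le_one hn).2 hOn
  have e1 : 2 * ‖w‖ ^ 2 / ‖O‖ ^ 2 = 2 * (‖w‖ / ‖O‖) * (‖w‖ / ‖O‖) := by ring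
  have e2 : (‖O‖⁻¹ - n⁻¹) * ‖w‖ = (‖w‖ / ‖O‖) * (1 - ‖O‖ / n) := by field_simp
  have e3 : n⁻¹ * (2 * ‖x - u‖ * ‖w‖) = 2 * (‖w‖ / ‖O‖) * (‖O‖ / n) * ‖x - u‖ := by
    field_simp
  calc _ ≤ 2 * ‖w‖ ^ 2 / ‖O‖ ^ 2 + (‖O‖⁻¹ - n⁻¹) * ‖w‖ + n⁻¹ * (2 * ‖x - u‖ * ‖w‖) := by
        rw [hsplit]
        exact norm_add₃_le.trans (add_le_add_three hrem hgap_term hturn)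
    _ ≤ _ := by
        rw [e1, e2, e3]
        nlinarith [mul_nonneg hρ (sub_nonneg.2 hOn'), mul_le_mul_of_nonneg_left hOn'
          (mul_nonneg hρ (norm_nonneg (x - u)))]

lemma norm_sum_smul_le_sum_mul {ι : Type*} [Fintype ι] {c b : ι → ℝ} {v : ι → F}
    (hc : ∀ i, 0 ≤ c i) (hv : ∀ i, ‖v i‖ ≤ b i) : ‖∑ i, c i • v i‖ ≤ ∑ i, c i * b i := by
  refine (norm_sum_le _ _).trans (sum_le_sum fun i _ => ?_)
  rw [norm_smul, Real.norm_of_nonneg (hc i)]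
  exact mul_le_mul_of_nonneg_left (hv i) (hc i)

lemma norm_sub_sq_le_angle_sq {x y : F} (hx : ‖x‖ = 1) (hy : ‖y‖ = 1) :
    ‖x - y‖ ^ 2 ≤ angle x y ^ 2 := by
  have hcos := cos_angle x y
  rw [hx, hy, mul_one, div_one] at hcos
  rw [norm_sub_sq_real, hx, hy, ← hcos]
  linarith [Real.one_sub_sq_div_two_le_cos (x := angle x y)]

lemma norm_sum_smul_sq_le_of_sum_eq_zero {ι : Type*} [Fintype ι] {c : ι → ℝ} {V : ι → F}
    (hV : ∀ j, ‖V j‖ = 1) (hc : ∑ j, c j = 0) :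
    ‖∑ j, c j • V j‖ ^ 2 ≤ ∑ j, ∑ j', |c j| * |c j'| * angle (V j) (V j') ^ 2 / 2 := by
  rw [← real_inner_self_eq_norm_sq, inner_sum_smul_sum_smul_of_sum_eq_zero V hc V hc, neg_div,
    sum_div, ← sum_neg_distrib]
  refine sum_le_sum fun j _ => ?_
  rw [sum_div, ← sum_neg_distrib]
  refine sum_le_sum fun j' _ => ?_
  have hcc : -(c j * c j') ≤ |c j| * |c j'| := abs_mul (c j) (c j') ▸ neg_le_abs _
  calc -(c j * c j' * (‖V j - V j'‖ * ‖V j - V j'‖) / 2)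
      = -(c j * c j') * ‖V j - V j'‖ ^ 2 / 2 := by ring
    _ ≤ |c j| * |c j'| * angle (V j) (V j') ^ 2 / 2 := by
        gcongr ?_ * ?_ / _
        exact norm_sub_sq_le_angle_sq (hV j) (hV j')

lemma norm_inv_smul_sum_sub_sum_le_sqrt {ι : Type*} [Fintype ι] {ω α : ι → ℝ} {V : ι → F}
    (hV : ∀ j, ‖V j‖ = 1) {n : ℝ} (hn : n = ∑ j, ω j) (hn0 : 0 < n) (hα : ∑ j, α j = 1) :
    ‖n⁻¹ • ∑ j, ω j • V j - ∑ j, α j • V j‖ ≤ Real.sqrt ((1 / n ^ 2) *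
      ∑ j, ∑ j', |ω j - n * α j| * |ω j' - n * α j'| * angle (V j) (V j') ^ 2 / 2) := by
  have hsum : ∑ j, (ω j - n * α j) = 0 := by
    rw [sum_sub_distrib, ← mul_sum, hα, mul_one, hn, sub_self]
  have hvec : n⁻¹ • ∑ j, ω j • V j - ∑ j, α j • V j = n⁻¹ • ∑ j, (ω j - n * α j) • V j := by
    have hsplit : ∑ j, (ω j - n * α j) • V j = ∑ j, ω j • V j - n • ∑ j, α j • V j := by
      simp only [sub_smul, sum_sub_distrib, mul_smul, smul_sum]
    rw [hsplit, smul_sub, smul_smul, inv_mul_cancel₀ hn0.ne', one_smul]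
  rw [hvec, Real.le_sqrt (norm_nonneg _) (by positivity), norm_smul, mul_pow, norm_inv,
    Real.norm_of_nonneg hn0.le, one_div, inv_pow]
  gcongr
  exact norm_sum_smul_sq_le_of_sum_eq_zero hV hsum

lemma norm_sum_smul_sub_le {ι : Type*} [Fintype ι] {α n A B : ι → ℝ} (hα : ∀ i, 0 ≤ α i)
    (hαsum : ∑ i, α i = 1) (P : F →ₗ[ℝ] F) {x y w : ι → F} {a z : F} {C : ℝ}
    (hA : ∀ i, ‖y i - x i - (n i)⁻¹ • P (w i)‖ ≤ A i) (hB : ∀ i, ‖x i - a‖ ≤ B i)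
    (hC : ‖a + P (∑ i, (α i / n i) • w i) - z‖ ≤ C) :
    ‖∑ i, α i • y i - z‖ ≤ C + ∑ i, α i * B i + ∑ i, α i * A i := by
  have hsplit : ∑ i, α i • y i - z = ∑ i, α i • (y i - x i - (n i)⁻¹ • P (w i))
      + ∑ i, α i • (x i - a) + (a + P (∑ i, (α i / n i) • w i) - z) := by
    simp only [smul_sub, sum_sub_distrib, ← sum_smul, hαsum, one_smul, map_sum, map_smul,
      smul_smul, div_eq_mul_inv]
    abel
  rw [hsplit]
  refine norm_add₃_le.trans ?_
  linarith [norm_sum_smul_le_sum_mul hα hA, norm_sum_smul_le_sum_mul hα hB]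

end InnerProductSpace

lemma phi_eq_normalize : phi = (normalize : EuclideanSpace ℝ (Fin 3) → _) := rfl

theorem static_weight_reduction_error_general
    (N : ℕ)
    (V : Fin N → EuclideanSpace ℝ (Fin 3)) (hV : ∀ i, ‖V i‖ = 1)
    (ω : Fin N → Fin N → ℝ) (hω : ∀ i j, ω i j = 0 ∨ ω i j = 1)
    (α : Fin N → ℝ) (hα : ∀ i, 0 ≤ α i) (hαsum : ∑ i, α i = 1)
    (w : Fin N → EuclideanSpace ℝ (Fin 3))
    (n : Fin N → ℝ) (hn : ∀ i, n i = ∑ j, ω i j)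
    (O : Fin N → EuclideanSpace ℝ (Fin 3)) (hO : ∀ i, O i = ∑ j, ω i j • V j)
    (D : Fin N → EuclideanSpace ℝ (Fin 3)) (hD : ∀ i, D i = O i + w i)
    (Vα : EuclideanSpace ℝ (Fin 3)) (hVα : Vα = ∑ i, α i • V i)
    (wb : EuclideanSpace ℝ (Fin 3)) (hwb : wb = ∑ i, (α i / n i) • w i)
    (Q : Fin N → ℝ)
    (hQ : ∀ i, Q i = (1 / n i ^ 2) *
      ∑ j, ∑ j', |ω i j - n i * α j| * |ω i j' - n i * α j'| *
        InnerProductGeometry.angle (V j) (V j') ^ 2 / 2)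
    (hn0 : ∀ i, 0 < n i) (hO0 : ∀ i, O i ≠ 0) (hD0 : ∀ i, D i ≠ 0)
    (hVα0 : Vα ≠ 0) (hVαw : Vα + wb ≠ 0) :
    ‖(∑ i, α i • phi (D i)) - ‖Vα‖ • phi (Vα + wb)‖ ≤
      2 * ‖wb‖ ^ 2 / ‖Vα‖
      + ∑ i, α i * ((1 - ‖O i‖ / n i) + Real.sqrt (Q i))
      + 2 * ∑ i, α i * (‖w i‖ / ‖O i‖) *
          ((1 - ‖Vα‖) + ‖w i‖ / ‖O i‖ + 2 * (1 - ‖O i‖ / n i) + Real.sqrt (Q i)) := by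
  subst hwb
  have hVα1 : ‖Vα‖ ≤ 1 := by
    simpa [hVα, hαsum] using norm_sum_smul_le_sum_mul hα fun i => (hV i).le
  have hOn : ∀ i, ‖O i‖ ≤ n i := fun i => by
    have hω0 : ∀ j, 0 ≤ ω i j := fun j => by rcases hω i j with h | h <;> simp [h]
    simpa [hO i, hn i] using norm_sum_smul_le_sum_mul hω0 fun j => (hV j).le
  have hC := norm_add_perpProj_sub_smul_normalize_le _ hVα0 hVαw
  set u := normalize Vα
  have hπα : ‖u - Vα‖ = 1 - ‖Vα‖ := by simpa using norm_normalize_sub_inv_smul hVα0 hVα1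
  have hB : ∀ i, ‖normalize (O i) - Vα‖ ≤ (1 - ‖O i‖ / n i) + Real.sqrt (Q i) := fun i => by
    refine (norm_sub_le_norm_sub_add_norm_sub _ ((n i)⁻¹ • O i) _).trans ?_
    rw [norm_normalize_sub_inv_smul (hO0 i) (hOn i), hQ i, hO i, hVα]
    gcongr
    exact norm_inv_smul_sum_sub_sum_le_sqrt hV (hn i) (hn0 i) hαsum
  have hA : ∀ i, ‖normalize (D i) - normalize (O i) - (n i)⁻¹ • perpProj u (w i)‖ ≤
      2 * (‖w i‖ / ‖O i‖) *
        ((1 - ‖Vα‖) + ‖w i‖ / ‖O i‖ + 2 * (1 - ‖O i‖ / n i) + Real.sqrt (Q i)) := fun i => by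
    have hDi : O i + w i ≠ 0 := hD i ▸ hD0 i
    rw [hD i]
    refine (norm_normalize_add_sub_sub_smul_perpProj_le (hO0 i) hDi (hOn i)
      (norm_normalize hVα0)).trans ?_
    have hπ : 0 ≤ 1 - ‖O i‖ / n i := sub_nonneg.2 ((div_le_one (hn0 i)).2 (hOn i))
    have := norm_sub_le_norm_sub_add_norm_sub (normalize (O i)) Vα u
    gcongr 2 * _ * ?_
    linarith [hB i, norm_sub_rev u Vα]
  rw [phi_eq_normalize]
  refine (norm_sum_smul_sub_le hα hαsum (perpProj u) hA hB hC).trans_eq ?_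
  rw [mul_sum]
  congr 1
  exact sum_congr rfl fun i _ => by ring

/-- Theorem (static-weight reduction error bound, Theorem 1 of the paper). -/
theorem static_weight_reduction_error
    (N : ℕ) (hN : 0 < N)
    (V : Fin N → EuclideanSpace ℝ (Fin 3)) (hV : ∀ i, ‖V i‖ = 1)
    (ω : Fin N → Fin N → ℝ) (hω : ∀ i j, ω i j = 0 ∨ ω i j = 1)
    (α : Fin N → ℝ) (hα : ∀ i, 0 ≤ α i) (hαsum : ∑ i, α i = 1)
    (w : Fin N → EuclideanSpace ℝ (Fin 3))
    (n : Fin N → ℝ) (hn : ∀ i, n i = ∑ j, ω i j)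
    (O : Fin N → EuclideanSpace ℝ (Fin 3)) (hO : ∀ i, O i = ∑ j, ω i j • V j)
    (D : Fin N → EuclideanSpace ℝ (Fin 3)) (hD : ∀ i, D i = O i + w i)
    (Vα : EuclideanSpace ℝ (Fin 3)) (hVα : Vα = ∑ i, α i • V i)
    (wb : EuclideanSpace ℝ (Fin 3)) (hwb : wb = ∑ i, (α i / n i) • w i)
    (Q : Fin N → ℝ)
    (hQ : ∀ i, Q i = (1 / n i ^ 2) *
      ∑ j, ∑ j', |ω i j - n i * α j| * |ω i j' - n i * α j'| *
        InnerProductGeometry.angle (V j) (V j') ^ 2 / 2)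
    (hn0 : ∀ i, 0 < n i) (hO0 : ∀ i, O i ≠ 0) (hD0 : ∀ i, D i ≠ 0)
    (hVα0 : Vα ≠ 0) (hVαw : Vα + wb ≠ 0) :
    ‖(∑ i, α i • phi (D i)) - ‖Vα‖ • phi (Vα + wb)‖ ≤
      2 * ‖wb‖ ^ 2 / ‖Vα‖
      + ∑ i, α i * ((1 - ‖O i‖ / n i) + Real.sqrt (Q i))
      + 2 * ∑ i, α i * (‖w i‖ / ‖O i‖) *
          ((1 - ‖Vα‖) + ‖w i‖ / ‖O i‖ + 2 * (1 - ‖O i‖ / n i) + Real.sqrt (Q i)) :=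
  static_weight_reduction_error_general N V hV ω hω α hα hαsum w n hn O hO D hD Vα hVα wb hwb Q hQ
    hn0 hO0 hD0 hVα0 hVαw
end

section
/- Assume n_i > 0 and O_i ≠ 0 for all i = 1,…,N, assume D_i = O_i + w_i ≠ 0 for all i, assume ⟨V⟩_α ≠ 0 and ⟨V⟩_α + w ≠ 0, and assume that θ_{ij} = 0 for all i,j ∈ {1,…,N} (all directions aligned). Then the residual vector ε_α = ⟨φ(D)⟩_α − ‖⟨V⟩_α‖ · φ(⟨V⟩_α + w) satisfies ‖ε_α‖ ≤ 2(‖w‖² + Σ_{i=1}^N α_i ‖w_i‖²). -/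
open Finset
open scoped BigOperators RealInnerProductSpace

/-!
Aligned unit directions all equal one unit vector `u`, and `D i = n i • (u + w i / n i)`, so
`φ (D i) = φ (u + w i / n i)`. The map `x ↦ x - ⟪u, x - u⟫ • u` is the first-order expansion of
normalization at `u`; being affine it commutes with the `α`-average, so the error is an average of
second-order remainders minus one further remainder. Each remainder at `x` is at most
`2 * ‖x - u‖ ^ 2`, an inequality between polynomials in `‖x‖` and `⟪u, x⟫`.
-/

lemma one_le_sum_of_forall_eq_zero_or_one {ι : Type*} {s : Finset ι} {f : ι → ℝ}
    (hf : ∀ i, f i = 0 ∨ f i = 1) (hpos : 0 < ∑ i ∈ s, f i) : 1 ≤ ∑ i ∈ s, f i := by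
  obtain ⟨j, hj, hfj⟩ := exists_ne_zero_of_sum_ne_zero hpos.ne'
  have hfj1 : f j = 1 := (hf j).resolve_left hfj
  calc 1 = f j := hfj1.symm
    _ ≤ ∑ i ∈ s, f i :=
      single_le_sum (fun i _ => by rcases hf i with h | h <;> simp [h]) hj

/-- With `r = ‖x‖` and `c = ‖x‖ - ⟪u, x⟫`, the two sides are `r` times the squares of the
normalization remainder at `x` and of `2 * ‖x - u‖ ^ 2`. For `r ≤ 2 / 17` the difference is concave
in `c`, so it suffices to check the endpoints `c = 0` and `c = 2 * r`. -/
lemma normalize_remainder_poly_le (r c : ℝ) (hr : 0 < r) (hc0 : 0 ≤ c) (hc : c ≤ 2 * r) :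
    (2 - r) * c ^ 2 + 2 * c * (1 - r) ^ 2 ≤ 4 * r * ((1 - r) ^ 2 + 2 * c) ^ 2 := by
  have h2rc : 0 ≤ 2 * r - c := by linarith
  rcases le_total (2 / 17) r with hr17 | hr17
  · have hlin : 0 ≤ 4 * r * (1 - r) ^ 2 + (16 * r - 2) * c := by
      nlinarith [mul_nonneg h2rc (by positivity : 0 ≤ 4 * r * (1 - r) ^ 2),
        mul_nonneg hc0 (by positivity : 0 ≤ 4 * r ^ 2 * (r + 6))]
    nlinarith [mul_nonneg (sq_nonneg (1 - r)) hlin,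
      mul_nonneg (by linarith : 0 ≤ 17 * r - 2) (sq_nonneg c)]
  · have hend : 0 ≤ (1 - r) ^ 2 * (r + 6) + 17 * r - 2 := by nlinarith
    nlinarith [mul_nonneg (mul_nonneg hc0 h2rc) (by linarith : 0 ≤ 2 - 17 * r),
      mul_nonneg hc0 (mul_nonneg (by positivity : 0 ≤ 4 * r ^ 2) hend),
      mul_nonneg h2rc (by positivity : 0 ≤ 4 * r * (1 - r) ^ 4)]

section InnerProductSpace

variable {E : Type*} [NormedAddCommGroup E] [InnerProductSpace ℝ E]

def normalizeLinearization (u x : E) : E := x - ⟪u, x - u⟫ • u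

lemma sum_smul_normalizeLinearization {ι : Type*} (u : E) (s : Finset ι) (α : ι → ℝ)
    (x : ι → E) (hα : ∑ i ∈ s, α i = 1) :
    ∑ i ∈ s, α i • normalizeLinearization u (x i) =
      normalizeLinearization u (∑ i ∈ s, α i • x i) := by
  have hmean : ∑ i ∈ s, α i • (x i - u) = ∑ i ∈ s, α i • x i - u := by
    simp only [smul_sub, sum_sub_distrib, ← sum_smul, hα, one_smul]
  rw [normalizeLinearization, ← hmean, inner_sum]
  simp only [real_inner_smul_right]
  simp only [normalizeLinearization, smul_sub, sum_sub_distrib, smul_smul, ← sum_smul]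

lemma norm_normalize_sub_normalizeLinearization_le {u : E} (hu : ‖u‖ = 1) (x : E) :
    ‖NormedSpace.normalize x - normalizeLinearization u x‖ ≤ 2 * ‖x - u‖ ^ 2 := by
  rcases eq_or_ne x 0 with rfl | hx
  · simp [normalizeLinearization, hu]
  have hr : 0 < ‖x‖ := norm_pos_iff.mpr hx
  set r := ‖x‖
  set a := ⟪u, x⟫
  have ha : |a| ≤ r := by simpa [hu] using abs_real_inner_le_norm u x
  have hR :
      NormedSpace.normalize x - normalizeLinearization u x = (r⁻¹ - 1) • x + (a - 1) • u := by
    simp only [NormedSpace.normalize, normalizeLinearization, inner_sub_right,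
      real_inner_self_eq_norm_sq, hu, sub_smul, one_smul]
    norm_num
    abel
  have hnormR : r * ‖(r⁻¹ - 1) • x + (a - 1) • u‖ ^ 2 =
      (2 - r) * (r - a) ^ 2 + 2 * (r - a) * (1 - r) ^ 2 := by
    rw [norm_add_sq_real, norm_smul, norm_smul, real_inner_smul_left, real_inner_smul_right,
      real_inner_comm, hu, Real.norm_eq_abs, Real.norm_eq_abs, mul_pow, mul_pow, sq_abs, sq_abs]
    field_simp
    ring
  have hdist : ‖x - u‖ ^ 2 = (1 - r) ^ 2 + 2 * (r - a) := by
    rw [norm_sub_sq_real, hu, real_inner_comm]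
    ring
  have hpoly := normalize_remainder_poly_le r (r - a) hr (by linarith [le_abs_self a])
    (by linarith [neg_abs_le a])
  have hsq :
      ‖NormedSpace.normalize x - normalizeLinearization u x‖ ^ 2 ≤ (2 * ‖x - u‖ ^ 2) ^ 2 := by
    rw [hR, hdist]
    nlinarith
  exact (pow_le_pow_iff_left₀ (norm_nonneg _) (by positivity) two_ne_zero).mp hsq

theorem norm_sum_smul_normalize_sub_normalize_sum_le {ι : Type*} {u : E} (hu : ‖u‖ = 1)
    (s : Finset ι) (α : ι → ℝ) (x : ι → E) (hα : ∀ i ∈ s, 0 ≤ α i) (hα1 : ∑ i ∈ s, α i = 1) :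
    ‖∑ i ∈ s, α i • NormedSpace.normalize (x i) - NormedSpace.normalize (∑ i ∈ s, α i • x i)‖ ≤
      2 * (‖∑ i ∈ s, α i • x i - u‖ ^ 2 + ∑ i ∈ s, α i * ‖x i - u‖ ^ 2) := by
  set R : E → E := fun y => NormedSpace.normalize y - normalizeLinearization u y
  have hR : ∀ y, ‖R y‖ ≤ 2 * ‖y - u‖ ^ 2 := norm_normalize_sub_normalizeLinearization_le hu
  have hsplit :
      ∑ i ∈ s, α i • NormedSpace.normalize (x i) - NormedSpace.normalize (∑ i ∈ s, α i • x i) =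
        ∑ i ∈ s, α i • R (x i) - R (∑ i ∈ s, α i • x i) := by
    simp only [R, smul_sub, sum_sub_distrib, sum_smul_normalizeLinearization u s α x hα1]
    abel
  rw [hsplit]
  calc _ ≤ ‖∑ i ∈ s, α i • R (x i)‖ + ‖R (∑ i ∈ s, α i • x i)‖ := norm_sub_le _ _
    _ ≤ 2 * ∑ i ∈ s, α i * ‖x i - u‖ ^ 2 + 2 * ‖∑ i ∈ s, α i • x i - u‖ ^ 2 := by
      refine add_le_add ((norm_sum_le _ _).trans ?_) (hR _)
      rw [mul_sum]
      refine sum_le_sum fun i hi => ?_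
      rw [norm_smul, Real.norm_of_nonneg (hα i hi)]
      linarith [mul_le_mul_of_nonneg_left (hR (x i)) (hα i hi)]
    _ = _ := by ring

end InnerProductSpace

theorem static_weight_reduction_error_aligned_general
    (N : ℕ)
    (V : Fin N → EuclideanSpace ℝ (Fin 3)) (hV : ∀ i, ‖V i‖ = 1)
    (ω : Fin N → Fin N → ℝ) (hω : ∀ i j, ω i j = 0 ∨ ω i j = 1)
    (α : Fin N → ℝ) (hα : ∀ i, 0 ≤ α i) (hαsum : ∑ i, α i = 1)
    (w : Fin N → EuclideanSpace ℝ (Fin 3))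
    (n : Fin N → ℝ) (hn : ∀ i, n i = ∑ j, ω i j)
    (O : Fin N → EuclideanSpace ℝ (Fin 3)) (hO : ∀ i, O i = ∑ j, ω i j • V j)
    (D : Fin N → EuclideanSpace ℝ (Fin 3)) (hD : ∀ i, D i = O i + w i)
    (Vα : EuclideanSpace ℝ (Fin 3)) (hVα : Vα = ∑ i, α i • V i)
    (wb : EuclideanSpace ℝ (Fin 3)) (hwb : wb = ∑ i, (α i / n i) • w i)
    (hn0 : ∀ i, 0 < n i)
    (hθ : ∀ i j, InnerProductGeometry.angle (V i) (V j) = 0) :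
    ‖(∑ i, α i • phi (D i)) - ‖Vα‖ • phi (Vα + wb)‖ ≤
      2 * (‖wb‖ ^ 2 + ∑ i, α i * ‖w i‖ ^ 2) := by
  have hV_eq : ∀ i, V i = Vα := fun i => by
    rw [hVα, ← one_smul ℝ (V i), ← hαsum, sum_smul]
    refine sum_congr rfl fun j _ => ?_
    rw [InnerProductGeometry.eq_of_angle_eq_zero_of_norm_eq (hθ i j) ((hV i).trans (hV j).symm)]
  have hu : ‖Vα‖ = 1 := by
    obtain ⟨i, -⟩ := nonempty_of_sum_ne_zero (hαsum ▸ one_ne_zero : ∑ i, α i ≠ 0)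
    rw [← hV_eq i, hV i]
  set v : Fin N → EuclideanSpace ℝ (Fin 3) := fun i => (n i)⁻¹ • w i
  have hD_eq : ∀ i, D i = n i • (Vα + v i) := fun i => by
    simp [v, hD, hO, hV_eq, ← sum_smul, ← hn, smul_smul, (hn0 i).ne']
  have hmean : ∑ i, α i • (Vα + v i) = Vα + wb := by
    simp only [v, hwb, smul_add, sum_add_distrib, ← sum_smul, hαsum, one_smul, smul_smul,
      div_eq_mul_inv]
  have hv_le : ∀ i, ‖v i‖ ≤ ‖w i‖ := fun i => by
    have h1 : 1 ≤ n i := hn i ▸ one_le_sum_of_forall_eq_zero_or_one (hω i) (hn i ▸ hn0 i)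
    rw [norm_smul, Real.norm_of_nonneg (inv_nonneg.mpr (hn0 i).le)]
    exact mul_le_of_le_one_left (norm_nonneg _) (inv_le_one_of_one_le₀ h1)
  have key := norm_sum_smul_normalize_sub_normalize_sum_le hu univ α (fun i => Vα + v i)
    (fun i _ => hα i) hαsum
  have hphi : ∀ i, phi (D i) = NormedSpace.normalize (Vα + v i) := fun i => by
    rw [hD_eq]
    exact NormedSpace.normalize_smul_of_pos (hn0 i) _
  simp only [hmean, add_sub_cancel_left] at key
  calc _ = ‖∑ i, α i • NormedSpace.normalize (Vα + v i) - NormedSpace.normalize (Vα + wb)‖ := by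
        simp only [hphi, hu, one_smul]
        rfl
    _ ≤ 2 * (‖wb‖ ^ 2 + ∑ i, α i * ‖v i‖ ^ 2) := key
    _ ≤ 2 * (‖wb‖ ^ 2 + ∑ i, α i * ‖w i‖ ^ 2) := by
        gcongr with i
        exacts [hα i, hv_le i]

/-- Corollary (static-weight reduction error with fully aligned directions). -/
theorem static_weight_reduction_error_aligned
    (N : ℕ) (hN : 0 < N)
    (V : Fin N → EuclideanSpace ℝ (Fin 3)) (hV : ∀ i, ‖V i‖ = 1)
    (ω : Fin N → Fin N → ℝ) (hω : ∀ i j, ω i j = 0 ∨ ω i j = 1)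
    (α : Fin N → ℝ) (hα : ∀ i, 0 ≤ α i) (hαsum : ∑ i, α i = 1)
    (w : Fin N → EuclideanSpace ℝ (Fin 3))
    (n : Fin N → ℝ) (hn : ∀ i, n i = ∑ j, ω i j)
    (O : Fin N → EuclideanSpace ℝ (Fin 3)) (hO : ∀ i, O i = ∑ j, ω i j • V j)
    (D : Fin N → EuclideanSpace ℝ (Fin 3)) (hD : ∀ i, D i = O i + w i)
    (Vα : EuclideanSpace ℝ (Fin 3)) (hVα : Vα = ∑ i, α i • V i)
    (wb : EuclideanSpace ℝ (Fin 3)) (hwb : wb = ∑ i, (α i / n i) • w i)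
    (hn0 : ∀ i, 0 < n i) (hO0 : ∀ i, O i ≠ 0) (hD0 : ∀ i, D i ≠ 0)
    (hVα0 : Vα ≠ 0) (hVαw : Vα + wb ≠ 0)
    (hθ : ∀ i j, InnerProductGeometry.angle (V i) (V j) = 0) :
    ‖(∑ i, α i • phi (D i)) - ‖Vα‖ • phi (Vα + wb)‖ ≤
      2 * (‖wb‖ ^ 2 + ∑ i, α i * ‖w i‖ ^ 2) :=
  static_weight_reduction_error_aligned_general N V hV ω hω α hα hαsum w n hn O hO D hD Vα hVα wb
    hwb hn0 hθ
end

section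
/- Assume n_i > 0 and O_i ≠ 0 for all i = 1,…,N, assume ⟨V⟩_α ≠ 0, assume w_i = 0 for all i = 1,…,N, and assume that α is a normalized eigenvector centrality of the orientation network, i.e. α_j = Σ_{i=1}^N α_i ω_{ij}/n_i for every j = 1,…,N. Then the residual vector ε_α = ⟨φ(D)⟩_α − ‖⟨V⟩_α‖ · φ(⟨V⟩_α) satisfies ‖ε_α‖ ≤ Σ_{i=1}^N α_i π̃_i. -/
/-!
Since `w = 0`, `D i = O i`, and the eigenvector condition says exactly that the `α`-average of the
local means `O i / n i` is `⟨V⟩_α`; moreover `‖⟨V⟩_α‖ • φ ⟨V⟩_α = ⟨V⟩_α`. So `ε_α` is the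
`α`-average of `φ (O i) - O i / n i`, a vector parallel to `O i` of length `1 - ‖O i‖ / n i`
because `‖O i‖ ≤ n i`; the triangle inequality concludes.
-/

open Finset
open scoped BigOperators RealInnerProductSpace

section Normalization

variable {E : Type*} [NormedAddCommGroup E] [NormedSpace ℝ E]

theorem norm_smul_inv_norm_smul (x : E) : ‖x‖ • ‖x‖⁻¹ • x = x := by
  rcases eq_or_ne x 0 with rfl | hx
  · simp
  · exact smul_inv_smul₀ (norm_ne_zero_iff.mpr hx) x

/-- The normalization of `x` and the rescaling `x / r` are parallel, so their distance is the
difference of their lengths (the case `x = 0` only needs `0 ≤ 1`). -/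
theorem norm_inv_norm_smul_sub_inv_smul_le {x : E} {r : ℝ} (h : ‖x‖ / r ≤ 1) :
    ‖‖x‖⁻¹ • x - r⁻¹ • x‖ ≤ 1 - ‖x‖ / r := by
  rcases eq_or_ne x 0 with rfl | hx
  · simp
  have hx' : ‖x‖ ≠ 0 := norm_ne_zero_iff.mpr hx
  calc ‖‖x‖⁻¹ • x - r⁻¹ • x‖ = |(‖x‖⁻¹ - r⁻¹) * ‖x‖| := by
        rw [← sub_smul, norm_smul, Real.norm_eq_abs, abs_mul, abs_norm]
    _ = |1 - ‖x‖ / r| := by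
        rw [sub_mul, inv_mul_cancel₀ hx', div_eq_inv_mul]
    _ ≤ 1 - ‖x‖ / r := (abs_of_nonneg (sub_nonneg.mpr h)).le

variable {ι : Type*} [Fintype ι]

theorem norm_sum_smul_le_sum_of_norm_le_one {c : ι → ℝ} {v : ι → E} (hc : ∀ i, 0 ≤ c i)
    (hv : ∀ i, ‖v i‖ ≤ 1) : ‖∑ i, c i • v i‖ ≤ ∑ i, c i :=
  calc ‖∑ i, c i • v i‖ ≤ ∑ i, ‖c i • v i‖ := norm_sum_le _ _
    _ ≤ ∑ i, c i := sum_le_sum fun i _ => by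
        rw [norm_smul, Real.norm_of_nonneg (hc i)]
        exact mul_le_of_le_one_right (hc i) (hv i)

theorem norm_sum_smul_inv_norm_smul_sub_le {α r : ι → ℝ} {x : ι → E} (hα : ∀ i, 0 ≤ α i)
    (hx : ∀ i, ‖x i‖ / r i ≤ 1) :
    ‖∑ i, α i • ‖x i‖⁻¹ • x i - ∑ i, α i • (r i)⁻¹ • x i‖ ≤ ∑ i, α i * (1 - ‖x i‖ / r i) :=
  calc ‖∑ i, α i • ‖x i‖⁻¹ • x i - ∑ i, α i • (r i)⁻¹ • x i‖
      = ‖∑ i, α i • (‖x i‖⁻¹ • x i - (r i)⁻¹ • x i)‖ := by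
        simp only [← sum_sub_distrib, smul_sub]
    _ ≤ ∑ i, ‖α i • (‖x i‖⁻¹ • x i - (r i)⁻¹ • x i)‖ := norm_sum_le _ _
    _ ≤ ∑ i, α i * (1 - ‖x i‖ / r i) := sum_le_sum fun i _ => by
        rw [norm_smul, Real.norm_of_nonneg (hα i)]
        exact mul_le_mul_of_nonneg_left (norm_inv_norm_smul_sub_inv_smul_le (hx i)) (hα i)

end Normalization

theorem sum_smul_inv_smul_sum_eq_of_stationary {ι M : Type*} [Fintype ι] [AddCommGroup M]
    [Module ℝ M] {α n : ι → ℝ} {ω : ι → ι → ℝ} (V : ι → M)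
    (hα : ∀ j, α j = ∑ i, α i * ω i j / n i) :
    ∑ i, α i • (n i)⁻¹ • ∑ j, ω i j • V j = ∑ j, α j • V j := by
  have hterm : ∀ i, α i • (n i)⁻¹ • ∑ j, ω i j • V j = ∑ j, (α i * ω i j / n i) • V j := by
    intro i
    simp only [smul_sum, smul_smul]
    refine sum_congr rfl fun j _ => ?_
    ring_nf
  simp only [hterm]
  rw [sum_comm]
  exact sum_congr rfl fun j _ => by rw [← sum_smul, ← hα j]

theorem dynamic_weight_reduction_error_zero_w_general
    (N : ℕ)
    (V : Fin N → EuclideanSpace ℝ (Fin 3)) (hV : ∀ i, ‖V i‖ = 1)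
    (ω : Fin N → Fin N → ℝ) (hω : ∀ i j, ω i j = 0 ∨ ω i j = 1)
    (α : Fin N → ℝ) (hα : ∀ i, 0 ≤ α i)
    (w : Fin N → EuclideanSpace ℝ (Fin 3))
    (n : Fin N → ℝ) (hn : ∀ i, n i = ∑ j, ω i j)
    (O : Fin N → EuclideanSpace ℝ (Fin 3)) (hO : ∀ i, O i = ∑ j, ω i j • V j)
    (D : Fin N → EuclideanSpace ℝ (Fin 3)) (hD : ∀ i, D i = O i + w i)
    (Vα : EuclideanSpace ℝ (Fin 3)) (hVα : Vα = ∑ i, α i • V i)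
    (hw0 : ∀ i, w i = 0)
    (hEig : ∀ j, α j = ∑ i, α i * ω i j / n i) :
    ‖(∑ i, α i • phi (D i)) - ‖Vα‖ • phi Vα‖ ≤
      ∑ i, α i * (1 - ‖O i‖ / n i) := by
  have hDO : ∀ i, D i = O i := fun i => by rw [hD, hw0, add_zero]
  have hω_nonneg : ∀ i j, 0 ≤ ω i j := fun i j => by rcases hω i j with h | h <;> simp [h]
  have hO_le : ∀ i, ‖O i‖ / n i ≤ 1 := fun i => by
    have hle : ‖O i‖ ≤ n i := by
      rw [hO, hn]
      exact norm_sum_smul_le_sum_of_norm_le_one (hω_nonneg i) (fun j => (hV j).le)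
    exact div_le_one_of_le₀ hle ((norm_nonneg _).trans hle)
  have hmeans : Vα = ∑ i, α i • (n i)⁻¹ • O i := by
    simp only [hO, hVα]
    exact (sum_smul_inv_smul_sum_eq_of_stationary V hEig).symm
  rw [phi, norm_smul_inv_norm_smul, hmeans]
  simp only [phi, hDO]
  exact norm_sum_smul_inv_norm_smul_sub_le hα hO_le

/-- Corollary (dynamic-weight reduction error with zero attraction and stimulus). -/
theorem dynamic_weight_reduction_error_zero_w
    (N : ℕ) (hN : 0 < N)
    (V : Fin N → EuclideanSpace ℝ (Fin 3)) (hV : ∀ i, ‖V i‖ = 1)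
    (ω : Fin N → Fin N → ℝ) (hω : ∀ i j, ω i j = 0 ∨ ω i j = 1)
    (α : Fin N → ℝ) (hα : ∀ i, 0 ≤ α i) (hαsum : ∑ i, α i = 1)
    (w : Fin N → EuclideanSpace ℝ (Fin 3))
    (n : Fin N → ℝ) (hn : ∀ i, n i = ∑ j, ω i j)
    (O : Fin N → EuclideanSpace ℝ (Fin 3)) (hO : ∀ i, O i = ∑ j, ω i j • V j)
    (D : Fin N → EuclideanSpace ℝ (Fin 3)) (hD : ∀ i, D i = O i + w i)
    (Vα : EuclideanSpace ℝ (Fin 3)) (hVα : Vα = ∑ i, α i • V i)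
    (hn0 : ∀ i, 0 < n i) (hO0 : ∀ i, O i ≠ 0)
    (hVα0 : Vα ≠ 0) (hw0 : ∀ i, w i = 0)
    (hEig : ∀ j, α j = ∑ i, α i * ω i j / n i) :
    ‖(∑ i, α i • phi (D i)) - ‖Vα‖ • phi Vα‖ ≤
      ∑ i, α i * (1 - ‖O i‖ / n i) :=
  dynamic_weight_reduction_error_zero_w_general N V hV ω hω α hα w n hn O hO D hD Vα hVα hw0 hEig
end

section
/- For all x, y ∈ ℝ³ with x ≠ 0 and x + y ≠ 0, the vector δφ(x,y) = φ(x+y) − (φ(x) + y/‖x‖ − (⟨y,x⟩/‖x‖³)·x) satisfies ‖δφ(x,y)‖ ≤ (2/‖x‖²)·‖y‖². -/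
open scoped RealInnerProductSpace

lemma poly_le_of_triangle_ineq {a b n s : ℝ} (hs : b ^ 2 = a ^ 2 + 2 * s + n ^ 2)
    (hn : n ≤ b + a) (hb : b ≤ a + n) (ha : a ≤ b + n) :
    a ^ 2 * b * (a - b) ^ 2 + 2 * (a - b) * s * (a ^ 2 + s) + b * s ^ 2 ≤ 4 * n ^ 4 * b := by
  obtain rfl : s = (b ^ 2 - a ^ 2 - n ^ 2) / 2 := by linarith
  have h₁ : 0 ≤ (a + b - n) * (2 * (b - a) ^ 4 + ((b - a) ^ 2 - n ^ 2) ^ 2 + 14 * n ^ 4) :=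
    mul_nonneg (by linarith) (by positivity)
  have h₂ : 0 ≤ (n + b - a) * ((2 * n) ^ 4 - (n - b + a) ^ 4) :=
    mul_nonneg (by linarith)
      (sub_nonneg.2 (pow_le_pow_left₀ (by linarith) (by linarith) 4))
  linear_combination (h₁ + h₂) / 8

section InnerProductSpace

variable {E : Type*} [NormedAddCommGroup E] [InnerProductSpace ℝ E]

lemma norm_smul_add_smul_sq (c d : ℝ) (u v : E) :
    ‖c • u + d • v‖ ^ 2 = c ^ 2 * ‖u‖ ^ 2 + 2 * c * d * ⟪u, v⟫ + d ^ 2 * ‖v‖ ^ 2 := by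
  rw [norm_add_sq_real, norm_smul, norm_smul, real_inner_smul_left, real_inner_smul_right]
  simp only [Real.norm_eq_abs, mul_pow, sq_abs]
  ring

lemma norm_sq_normalize_linearization_error {x y : E} (hx : x ≠ 0) (hxy : x + y ≠ 0) :
    ‖x‖ ^ 4 * ‖x + y‖ *
        ‖‖x + y‖⁻¹ • (x + y) - (‖x‖⁻¹ • x + ‖x‖⁻¹ • y - (⟪y, x⟫ / ‖x‖ ^ 3) • x)‖ ^ 2 =
      ‖x‖ ^ 2 * ‖x + y‖ * (‖x‖ - ‖x + y‖) ^ 2 +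
        2 * (‖x‖ - ‖x + y‖) * ⟪y, x⟫ * (‖x‖ ^ 2 + ⟪y, x⟫) + ‖x + y‖ * ⟪y, x⟫ ^ 2 := by
  have ha : ‖x‖ ≠ 0 := norm_ne_zero_iff.2 hx
  have hb : ‖x + y‖ ≠ 0 := norm_ne_zero_iff.2 hxy
  have hδ : ‖x + y‖⁻¹ • (x + y) - (‖x‖⁻¹ • x + ‖x‖⁻¹ • y - (⟪y, x⟫ / ‖x‖ ^ 3) • x) =
      (‖x + y‖⁻¹ - ‖x‖⁻¹) • (x + y) + (⟪y, x⟫ / ‖x‖ ^ 3) • x := by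
    module
  rw [hδ, norm_smul_add_smul_sq, inner_add_left, real_inner_self_eq_norm_sq]
  field_simp

end InnerProductSpace

/-- Lemma A.1: second-order error bound for the linearization of the
normalization operator. -/
theorem deltaPhi_norm_le (x y : EuclideanSpace ℝ (Fin 3)) (hx : x ≠ 0) (hxy : x + y ≠ 0) :
    ‖phi (x + y) - (phi x + ‖x‖⁻¹ • y - (⟪y, x⟫ / ‖x‖ ^ 3) • x)‖ ≤
      (2 / ‖x‖ ^ 2) * ‖y‖ ^ 2 := by
  have ha : 0 < ‖x‖ := norm_pos_iff.2 hx
  have hb : 0 < ‖x + y‖ := norm_pos_iff.2 hxy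
  have key := poly_le_of_triangle_ineq (a := ‖x‖) (b := ‖x + y‖) (n := ‖y‖)
    (by rw [norm_add_sq_real, real_inner_comm])
    (norm_le_add_norm_add' x y) (norm_add_le x y) (norm_le_add_norm_add x y)
  rw [← norm_sq_normalize_linearization_error hx hxy] at key
  refine le_of_pow_le_pow_left₀ two_ne_zero (by positivity) (le_of_mul_le_mul_left
    (key.trans_eq ?_) (by positivity : 0 < ‖x‖ ^ 4 * ‖x + y‖))
  field_simp
  ring
end

section
/- For every i ∈ {1,…,N} with n_i > 0, the vector δ_α O_i = O_i − n_i ⟨V⟩_α satisfies ‖δ_α O_i‖ ≤ n_i √(Q_{i,n_iα}). -/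
open Finset
open scoped BigOperators RealInnerProductSpace

/-!
Put `c j = ω i j - n i α j`. Then `O i - n i ⟨V⟩_α = ∑ j, c j • V j` and `∑ j, c j = 0`, so the
polarization identity for weights summing to zero gives
`‖∑ j, c j • V j‖² = -½ ∑ j j', c j c j' ‖V j - V j'‖²`. For unit vectors the chord
`‖V j - V j'‖² = 2 - 2 cos θ_{jj'}` is at most `θ_{jj'}²`, and the double sum is exactly `n i² Q i`.
-/

namespace InnerProductGeometry

variable {E : Type*} [NormedAddCommGroup E] [InnerProductSpace ℝ E]

theorem norm_sub_sq_le_angle_sq {v w : E} (hv : ‖v‖ = 1) (hw : ‖w‖ = 1) :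
    ‖v - w‖ ^ 2 ≤ angle v w ^ 2 := by
  rw [sq ‖v - w‖, norm_sub_sq_eq_norm_sq_add_norm_sq_sub_two_mul_norm_mul_norm_mul_cos_angle,
    hv, hw]
  linarith [Real.one_sub_sq_div_two_le_cos (x := angle v w)]

theorem norm_sum_smul_sq_le_of_sum_eq_zero {ι : Type*} (s : Finset ι) (c : ι → ℝ) (v : ι → E)
    (hv : ∀ j ∈ s, ‖v j‖ = 1) (hc : ∑ j ∈ s, c j = 0) :
    ‖∑ j ∈ s, c j • v j‖ ^ 2 ≤
      ∑ j ∈ s, ∑ j' ∈ s, |c j| * |c j'| * angle (v j) (v j') ^ 2 / 2 := by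
  rw [← real_inner_self_eq_norm_sq, inner_sum_smul_sum_smul_of_sum_eq_zero v hc v hc]
  have hterm : ∀ j ∈ s, ∀ j' ∈ s,
      -(c j * c j' * (‖v j - v j'‖ * ‖v j - v j'‖)) ≤ |c j| * |c j'| * angle (v j) (v j') ^ 2 := by
    intro j hj j' hj'
    rw [← sq, ← neg_mul, ← abs_mul]
    calc -(c j * c j') * ‖v j - v j'‖ ^ 2 ≤ |c j * c j'| * ‖v j - v j'‖ ^ 2 := by
          gcongr; exact neg_le_abs _
      _ ≤ |c j * c j'| * angle (v j) (v j') ^ 2 :=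
          mul_le_mul_of_nonneg_left (norm_sub_sq_le_angle_sq (hv j hj) (hv j' hj')) (abs_nonneg _)
  calc (-∑ j ∈ s, ∑ j' ∈ s, c j * c j' * (‖v j - v j'‖ * ‖v j - v j'‖)) / 2
      = (∑ j ∈ s, ∑ j' ∈ s, -(c j * c j' * (‖v j - v j'‖ * ‖v j - v j'‖))) / 2 := by
        simp only [sum_neg_distrib]
    _ ≤ (∑ j ∈ s, ∑ j' ∈ s, |c j| * |c j'| * angle (v j) (v j') ^ 2) / 2 := by
        gcongr with j hj j' hj'; exact hterm j hj j' hj'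
    _ = _ := by simp only [sum_div]

end InnerProductGeometry

theorem deltaOi_norm_le_general
    (N : ℕ)
    (V : Fin N → EuclideanSpace ℝ (Fin 3)) (hV : ∀ i, ‖V i‖ = 1)
    (ω : Fin N → Fin N → ℝ)
    (α : Fin N → ℝ) (hαsum : ∑ i, α i = 1)
    (n : Fin N → ℝ) (hn : ∀ i, n i = ∑ j, ω i j)
    (O : Fin N → EuclideanSpace ℝ (Fin 3)) (hO : ∀ i, O i = ∑ j, ω i j • V j)
    (Vα : EuclideanSpace ℝ (Fin 3)) (hVα : Vα = ∑ i, α i • V i)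
    (Q : Fin N → ℝ)
    (hQ : ∀ i, Q i = (1 / n i ^ 2) *
      ∑ j, ∑ j', |ω i j - n i * α j| * |ω i j' - n i * α j'| *
        InnerProductGeometry.angle (V j) (V j') ^ 2 / 2)
    (i : Fin N) (hn0 : 0 < n i) :
    ‖O i - n i • Vα‖ ≤ n i * Real.sqrt (Q i) := by
  set c : Fin N → ℝ := fun j => ω i j - n i * α j
  have hc : ∑ j, c j = 0 := by
    simp only [c, sum_sub_distrib, ← mul_sum, hαsum, mul_one, hn i, sub_self]
  have hdev : O i - n i • Vα = ∑ j, c j • V j := by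
    simp only [hO, hVα, smul_sum, smul_smul, ← sum_sub_distrib, ← sub_smul, c]
  have hQ' : n i ^ 2 * Q i =
      ∑ j, ∑ j', |c j| * |c j'| * InnerProductGeometry.angle (V j) (V j') ^ 2 / 2 := by
    rw [hQ i, ← mul_assoc, mul_one_div_cancel (pow_ne_zero 2 hn0.ne'), one_mul]
  have hsq : ‖O i - n i • Vα‖ ^ 2 ≤ n i ^ 2 * Q i := by
    rw [hdev, hQ']
    exact InnerProductGeometry.norm_sum_smul_sq_le_of_sum_eq_zero _ c V (fun j _ => hV j) hc
  calc ‖O i - n i • Vα‖ ≤ Real.sqrt (n i ^ 2 * Q i) :=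
        (Real.le_sqrt (norm_nonneg _) ((sq_nonneg _).trans hsq)).2 hsq
    _ = n i * Real.sqrt (Q i) := by rw [Real.sqrt_mul (sq_nonneg _), Real.sqrt_sq hn0.le]

/-- Lemma A.2: bound on the deviation of `O_i` from `n_i ⟨V⟩_α`. -/
theorem deltaOi_norm_le
    (N : ℕ) (hN : 0 < N)
    (V : Fin N → EuclideanSpace ℝ (Fin 3)) (hV : ∀ i, ‖V i‖ = 1)
    (ω : Fin N → Fin N → ℝ) (hω : ∀ i j, ω i j = 0 ∨ ω i j = 1)
    (α : Fin N → ℝ) (hα : ∀ i, 0 ≤ α i) (hαsum : ∑ i, α i = 1)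
    (n : Fin N → ℝ) (hn : ∀ i, n i = ∑ j, ω i j)
    (O : Fin N → EuclideanSpace ℝ (Fin 3)) (hO : ∀ i, O i = ∑ j, ω i j • V j)
    (Vα : EuclideanSpace ℝ (Fin 3)) (hVα : Vα = ∑ i, α i • V i)
    (Q : Fin N → ℝ)
    (hQ : ∀ i, Q i = (1 / n i ^ 2) *
      ∑ j, ∑ j', |ω i j - n i * α j| * |ω i j' - n i * α j'| *
        InnerProductGeometry.angle (V j) (V j') ^ 2 / 2)
    (i : Fin N) (hn0 : 0 < n i) :
    ‖O i - n i • Vα‖ ≤ n i * Real.sqrt (Q i) :=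
  deltaOi_norm_le_general N V hV ω α hαsum n hn O hO Vα hVα Q hQ i hn0
end

section
/- For every nonzero z ∈ ℝ³ with coordinates (z₁, z₂, z₃), writing e₁ = (1,0,0), one has ‖z/‖z‖ − (1, z₂, z₃)‖² ≤ 4 ‖z − e₁‖⁴. -/
/-!
Write `r = ‖z‖` and `a = z₁`. Since `(1, z₂, z₃) = z + (1 - a) e₁`, both sides depend only on
`r` and `a`: `r² · LHS = (r - a)² + (1 - r)² (r² - a²)` and `‖z - e₁‖² = (r - 1)² + 2 (r - a)`.
Cauchy–Schwarz gives `|a| ≤ r`, and in the nonnegative variables `t = r - a`, `u = r + a` the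
resulting polynomial inequality has an explicit certificate with nonnegative coefficients.
-/

open RealInnerProductSpace

theorem sub_sq_add_one_sub_sq_mul_le_of_abs_le {r a : ℝ} (ha : |a| ≤ r) :
    (r - a) ^ 2 + (1 - r) ^ 2 * (r ^ 2 - a ^ 2) ≤
      4 * r ^ 2 * ((r - 1) ^ 2 + 2 * (r - a)) ^ 2 := by
  obtain ⟨hu, ht⟩ : 0 ≤ r + a ∧ 0 ≤ r - a := by constructor <;> linarith [abs_le.mp ha]
  set t := r - a
  set u := r + a
  have certificate :
      16 * (4 * r ^ 2 * ((r - 1) ^ 2 + 2 * t) ^ 2 - (t ^ 2 + (1 - r) ^ 2 * (r ^ 2 - a ^ 2))) =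
        (u * (u - 2) ^ 2) ^ 2 + 2 * t * u * (u - 2) ^ 2 * (3 * u ^ 2 + 2)
          + t ^ 2 * (48 * u + 8 * (u - u ^ 2) ^ 2 + 7 * u ^ 4)
          + t ^ 3 * (32 + 28 * u + 16 * u ^ 2 + 20 * u ^ 3)
          + t ^ 4 * (24 + 24 * u + 15 * u ^ 2) + t ^ 5 * (8 + 6 * u) + t ^ 6 := by
    simp only [t, u]
    ring
  have : 0 ≤ 16 * (4 * r ^ 2 * ((r - 1) ^ 2 + 2 * t) ^ 2 -
      (t ^ 2 + (1 - r) ^ 2 * (r ^ 2 - a ^ 2))) := by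
    rw [certificate]
    positivity
  linarith

theorem norm_inv_norm_smul_sub_le {E : Type*} [NormedAddCommGroup E] [InnerProductSpace ℝ E]
    {e z : E} (he : ‖e‖ = 1) (hz : z ≠ 0) :
    ‖‖z‖⁻¹ • z - (z + (1 - ⟪e, z⟫) • e)‖ ^ 2 ≤ 4 * ‖z - e‖ ^ 4 := by
  set r := ‖z‖
  set a := ⟪e, z⟫
  have hr : 0 < r := norm_pos_iff.mpr hz
  have ha : |a| ≤ r := by simpa [he] using abs_real_inner_le_norm e z
  have hlhs : r ^ 2 * ‖‖z‖⁻¹ • z - (z + (1 - a) • e)‖ ^ 2 =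
      (r - a) ^ 2 + (1 - r) ^ 2 * (r ^ 2 - a ^ 2) := by
    rw [show ‖z‖⁻¹ • z - (z + (1 - a) • e) = (r⁻¹ - 1) • z - (1 - a) • e by module,
      norm_sub_sq_real, norm_smul, norm_smul, real_inner_smul_left, real_inner_smul_right,
      real_inner_comm e z, he, mul_one, Real.norm_eq_abs, Real.norm_eq_abs, mul_pow, sq_abs,
      sq_abs]
    field_simp
    ring
  have hrhs : ‖z - e‖ ^ 2 = (r - 1) ^ 2 + 2 * (r - a) := by
    rw [norm_sub_sq_real, he, real_inner_comm e z]
    ring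
  refine le_of_mul_le_mul_left ?_ (pow_pos hr 2)
  rw [hlhs, show ‖z - e‖ ^ 4 = (‖z - e‖ ^ 2) ^ 2 by ring, hrhs]
  linarith [sub_sq_add_one_sub_sq_mul_le_of_abs_le ha]

/-- Key inequality in the proof of Lemma A.1:
`‖z/‖z‖ − (1, z₂, z₃)‖² ≤ 4‖z − e₁‖⁴` for every nonzero `z ∈ ℝ³`. -/
theorem normalized_sub_ineq (z : EuclideanSpace ℝ (Fin 3)) (hz : z ≠ 0) :
    ‖‖z‖⁻¹ • z - (WithLp.equiv 2 (Fin 3 → ℝ)).symm ![1, z 1, z 2]‖ ^ 2 ≤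
      4 * ‖z - (WithLp.equiv 2 (Fin 3 → ℝ)).symm ![1, 0, 0]‖ ^ 4 := by
  set e₁ : EuclideanSpace ℝ (Fin 3) := (WithLp.equiv 2 (Fin 3 → ℝ)).symm ![1, 0, 0]
  have he₁ : ‖e₁‖ = 1 := by simp [e₁, EuclideanSpace.norm_eq, Fin.sum_univ_three]
  have hinner : ⟪e₁, z⟫ = z 0 := by simp [e₁, PiLp.inner_apply, Fin.sum_univ_three]
  have hreplace : (WithLp.equiv 2 (Fin 3 → ℝ)).symm ![1, z 1, z 2] = z + (1 - ⟪e₁, z⟫) • e₁ := by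
    rw [hinner]
    ext i
    fin_cases i <;> simp [e₁]
  rw [hreplace]
  exact norm_inv_norm_smul_sub_le he₁ hz
end

section
/- Assume n_i > 0 and O_i ≠ 0 for all i = 1,…,N, and assume that α is a normalized eigenvector centrality of the orientation network, i.e. α_j = Σ_{i=1}^N α_i ω_{ij}/n_i for every j = 1,…,N. Then Σ_{i=1}^N α_i (φ(O_i) − ⟨V⟩_α) = Σ_{i=1}^N α_i (φ(O_i) − O_i/n_i), and consequently ‖Σ_{i=1}^N α_i (φ(O_i) − ⟨V⟩_α)‖ ≤ Σ_{i=1}^N α_i π̃_i. -/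
open Finset
open scoped BigOperators RealInnerProductSpace

/-!
Eigenvector centrality says that `α` is stationary for the row-normalised matrix `ω i j / n i`,
so the `α`-average of the local means `O i / n i` is the global mean `⟨V⟩_α`. Since the weights
sum to one, replacing `⟨V⟩_α` by `O i / n i` termwise does not change the sum. Each term then has
norm `α i * |1 / ‖O i‖ - 1 / n i| * ‖O i‖ = α i * (1 - ‖O i‖ / n i)`, because `‖O i‖ ≤ n i` by the
triangle inequality.
-/

section WeightedSums

variable {ι E : Type*} [Fintype ι]

theorem norm_sum_smul_le [SeminormedAddCommGroup E] [NormedSpace ℝ E]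
    {w b : ι → ℝ} {x : ι → E} (hw : ∀ i, 0 ≤ w i) (hx : ∀ i, ‖x i‖ ≤ b i) :
    ‖∑ i, w i • x i‖ ≤ ∑ i, w i * b i :=
  calc ‖∑ i, w i • x i‖ ≤ ∑ i, ‖w i • x i‖ := norm_sum_le _ _
    _ ≤ ∑ i, w i * b i := sum_le_sum fun i _ => by
        rw [norm_smul, Real.norm_of_nonneg (hw i)]
        exact mul_le_mul_of_nonneg_left (hx i) (hw i)

variable {R : Type*} [CommSemiring R] [AddCommMonoid E] [Module R E]

theorem sum_smul_sum_smul_eq_of_stationary {α : ι → R} {P : ι → ι → R}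
    (hα : ∀ j, α j = ∑ i, α i * P i j) (v : ι → E) :
    ∑ i, α i • ∑ j, P i j • v j = ∑ j, α j • v j := by
  simp only [smul_sum, smul_smul]
  rw [sum_comm]
  refine sum_congr rfl fun j _ => ?_
  rw [← sum_smul, ← hα j]

end WeightedSums

theorem sum_smul_sub_eq_of_sum_eq_one {ι R E : Type*} [Fintype ι] [Ring R] [AddCommGroup E]
    [Module R E] {α : ι → R} (hα : ∑ i, α i = 1) (a b : ι → E) :
    ∑ i, α i • (a i - ∑ k, α k • b k) = ∑ i, α i • (a i - b i) := by
  simp only [smul_sub, sum_sub_distrib, ← sum_smul, hα, one_smul]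

theorem norm_phi_sub_inv_smul_le {x : EuclideanSpace ℝ (Fin 3)} {r : ℝ} (hxr : ‖x‖ ≤ r) :
    ‖phi x - r⁻¹ • x‖ ≤ 1 - ‖x‖ / r := by
  rcases eq_or_ne x 0 with rfl | hx
  · simp [phi]
  have hx' : 0 < ‖x‖ := norm_pos_iff.mpr hx
  have hinv : r⁻¹ ≤ ‖x‖⁻¹ := inv_anti₀ hx' hxr
  rw [phi, ← sub_smul, norm_smul, Real.norm_of_nonneg (sub_nonneg.mpr hinv), sub_mul,
    inv_mul_cancel₀ hx'.ne', div_eq_inv_mul]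

theorem omega2_eq_and_norm_le_general
    (N : ℕ)
    (V : Fin N → EuclideanSpace ℝ (Fin 3)) (hV : ∀ i, ‖V i‖ = 1)
    (ω : Fin N → Fin N → ℝ) (hω : ∀ i j, ω i j = 0 ∨ ω i j = 1)
    (α : Fin N → ℝ) (hα : ∀ i, 0 ≤ α i) (hαsum : ∑ i, α i = 1)
    (n : Fin N → ℝ) (hn : ∀ i, n i = ∑ j, ω i j)
    (O : Fin N → EuclideanSpace ℝ (Fin 3)) (hO : ∀ i, O i = ∑ j, ω i j • V j)
    (Vα : EuclideanSpace ℝ (Fin 3)) (hVα : Vα = ∑ i, α i • V i)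
    (hEig : ∀ j, α j = ∑ i, α i * ω i j / n i) :
    (∑ i, α i • (phi (O i) - Vα)) = (∑ i, α i • (phi (O i) - (n i)⁻¹ • O i)) ∧
    ‖∑ i, α i • (phi (O i) - Vα)‖ ≤ ∑ i, α i * (1 - ‖O i‖ / n i) := by
  have hω_nonneg : ∀ i j, 0 ≤ ω i j := fun i j => by rcases hω i j with h | h <;> simp [h]
  have hO_le : ∀ i, ‖O i‖ ≤ n i := fun i => by
    simpa [hO i, hn i] using norm_sum_smul_le (hω_nonneg i) fun j => (hV j).le
  have hmean : Vα = ∑ i, α i • (n i)⁻¹ • O i := by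
    have hlocal : ∀ i, (n i)⁻¹ • O i = ∑ j, (ω i j / n i) • V j := fun i => by
      simp only [hO i, smul_sum, smul_smul, inv_mul_eq_div]
    simp only [hlocal, hVα]
    exact (sum_smul_sum_smul_eq_of_stationary (fun j => by simp only [hEig j, mul_div_assoc]) V).symm
  have heq : ∑ i, α i • (phi (O i) - Vα) = ∑ i, α i • (phi (O i) - (n i)⁻¹ • O i) := by
    rw [hmean]
    exact sum_smul_sub_eq_of_sum_eq_one hαsum _ _
  exact ⟨heq, heq ▸ norm_sum_smul_le hα fun i => norm_phi_sub_inv_smul_le (hO_le i)⟩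

/-- Key step in the proof of Theorem 2: if `α` is a normalized eigenvector
centrality of the orientation network, then
`Σ_i α_i (φ(O_i) − ⟨V⟩_α) = Σ_i α_i (φ(O_i) − O_i/n_i)` and consequently
`‖Σ_i α_i (φ(O_i) − ⟨V⟩_α)‖ ≤ Σ_i α_i π̃_i`. -/
theorem omega2_eq_and_norm_le
    (N : ℕ) (hN : 0 < N)
    (V : Fin N → EuclideanSpace ℝ (Fin 3)) (hV : ∀ i, ‖V i‖ = 1)
    (ω : Fin N → Fin N → ℝ) (hω : ∀ i j, ω i j = 0 ∨ ω i j = 1)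
    (α : Fin N → ℝ) (hα : ∀ i, 0 ≤ α i) (hαsum : ∑ i, α i = 1)
    (n : Fin N → ℝ) (hn : ∀ i, n i = ∑ j, ω i j)
    (O : Fin N → EuclideanSpace ℝ (Fin 3)) (hO : ∀ i, O i = ∑ j, ω i j • V j)
    (Vα : EuclideanSpace ℝ (Fin 3)) (hVα : Vα = ∑ i, α i • V i)
    (hn0 : ∀ i, 0 < n i) (hO0 : ∀ i, O i ≠ 0)
    (hEig : ∀ j, α j = ∑ i, α i * ω i j / n i) :
    (∑ i, α i • (phi (O i) - Vα)) = (∑ i, α i • (phi (O i) - (n i)⁻¹ • O i)) ∧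
    ‖∑ i, α i • (phi (O i) - Vα)‖ ≤ ∑ i, α i * (1 - ‖O i‖ / n i) :=
  omega2_eq_and_norm_le_general N V hV ω hω α hα hαsum n hn O hO Vα hVα hEig
end

section
/- Let i ∈ {1,…,N} and assume n_i > 0 and O_i ≠ 0. Then ‖(‖O_i‖⁻³ − n_i⁻³)·⟨w_i, O_i⟩·O_i‖ ≤ ρ_i (1 − π_i³) ≤ 3 π̃_i ρ_i. -/
/-!
By the triangle inequality `‖O_i‖ ≤ n_i`, so the scalar `‖O_i‖⁻³ − n_i⁻³` is nonnegative, and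
Cauchy–Schwarz bounds the vector by `(‖O_i‖⁻³ − n_i⁻³) ‖w_i‖ ‖O_i‖² = ρ_i (1 − π_i³)`.
The second inequality is Bernoulli's inequality `1 + 3(π − 1) ≤ π³`.
-/

open Finset
open scoped RealInnerProductSpace

lemma norm_sum_smul_le_sum {ι E : Type*} [SeminormedAddCommGroup E] [NormedSpace ℝ E]
    (s : Finset ι) {c : ι → ℝ} {v : ι → E} (hc : ∀ j ∈ s, 0 ≤ c j) (hv : ∀ j ∈ s, ‖v j‖ ≤ 1) :
    ‖∑ j ∈ s, c j • v j‖ ≤ ∑ j ∈ s, c j :=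
  (norm_sum_le _ _).trans <| sum_le_sum fun j hj => by
    rw [norm_smul, Real.norm_of_nonneg (hc j hj)]
    exact mul_le_of_le_one_right (hc j hj) (hv j hj)

section InnerProductSpace

variable {E : Type*} [NormedAddCommGroup E] [InnerProductSpace ℝ E]

lemma norm_mul_inner_smul_le (c : ℝ) (w x : E) :
    ‖(c * ⟪w, x⟫) • x‖ ≤ |c| * ‖w‖ * ‖x‖ ^ 2 := by
  rw [norm_smul, norm_mul, Real.norm_eq_abs, Real.norm_eq_abs]
  calc |c| * |⟪w, x⟫| * ‖x‖ ≤ |c| * (‖w‖ * ‖x‖) * ‖x‖ := by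
        gcongr; exact abs_real_inner_le_norm w x
    _ = |c| * ‖w‖ * ‖x‖ ^ 2 := by ring

lemma norm_inv_pow_three_sub_mul_inner_smul_le (w x : E) {n : ℝ} (hxn : ‖x‖ ≤ n) :
    ‖(((‖x‖ ^ 3)⁻¹ - (n ^ 3)⁻¹) * ⟪w, x⟫) • x‖ ≤ ‖w‖ / ‖x‖ * (1 - (‖x‖ / n) ^ 3) := by
  rcases eq_or_ne x 0 with rfl | hx
  · simp
  have hx₀ : 0 < ‖x‖ := norm_pos_iff.2 hx
  have hn₀ : n ≠ 0 := (hx₀.trans_le hxn).ne'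
  have hc : 0 ≤ (‖x‖ ^ 3)⁻¹ - (n ^ 3)⁻¹ :=
    sub_nonneg.2 <| inv_anti₀ (by positivity) (pow_le_pow_left₀ hx₀.le hxn 3)
  calc _ ≤ |(‖x‖ ^ 3)⁻¹ - (n ^ 3)⁻¹| * ‖w‖ * ‖x‖ ^ 2 := norm_mul_inner_smul_le _ w x
    _ = ‖w‖ / ‖x‖ * (1 - (‖x‖ / n) ^ 3) := by
      rw [abs_of_nonneg hc]
      field_simp

end InnerProductSpace

lemma one_sub_pow_three_le {t : ℝ} (ht : -1 ≤ t) : 1 - t ^ 3 ≤ 3 * (1 - t) := by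
  have := one_add_mul_le_pow (a := t - 1) (by linarith) 3
  simp only [add_sub_cancel, Nat.cast_ofNat] at this
  linarith

theorem zeta4_norm_le_general
    (N : ℕ)
    (V : Fin N → EuclideanSpace ℝ (Fin 3)) (hV : ∀ i, ‖V i‖ = 1)
    (ω : Fin N → Fin N → ℝ) (hω : ∀ i j, ω i j = 0 ∨ ω i j = 1)
    (n : Fin N → ℝ) (hn : ∀ i, n i = ∑ j, ω i j)
    (O : Fin N → EuclideanSpace ℝ (Fin 3)) (hO : ∀ i, O i = ∑ j, ω i j • V j)
    (w : Fin N → EuclideanSpace ℝ (Fin 3))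
    (i : Fin N) :
    ‖(((‖O i‖ ^ 3)⁻¹ - (n i ^ 3)⁻¹) * ⟪w i, O i⟫) • O i‖ ≤
        (‖w i‖ / ‖O i‖) * (1 - (‖O i‖ / n i) ^ 3) ∧
      (‖w i‖ / ‖O i‖) * (1 - (‖O i‖ / n i) ^ 3) ≤
        3 * (1 - ‖O i‖ / n i) * (‖w i‖ / ‖O i‖) := by
  have hOn : ‖O i‖ ≤ n i := by
    rw [hO, hn]
    refine norm_sum_smul_le_sum _ (fun j _ => ?_) (fun j _ => (hV j).le)
    rcases hω i j with h | h <;> simp [h]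
  refine ⟨norm_inv_pow_three_sub_mul_inner_smul_le _ _ hOn, ?_⟩
  have hπ : 0 ≤ ‖O i‖ / n i := div_nonneg (norm_nonneg _) ((norm_nonneg _).trans hOn)
  rw [mul_comm (3 * _)]
  exact mul_le_mul_of_nonneg_left (one_sub_pow_three_le (by linarith)) (by positivity)

/-- Bound (A.12) on `ζ_{i,4}` in the proof of Proposition A.3:
`‖(‖O_i‖⁻³ − n_i⁻³)⟨w_i, O_i⟩ O_i‖ ≤ ρ_i (1 − π_i³) ≤ 3 π̃_i ρ_i`. -/
theorem zeta4_norm_le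
    (N : ℕ) (hN : 0 < N)
    (V : Fin N → EuclideanSpace ℝ (Fin 3)) (hV : ∀ i, ‖V i‖ = 1)
    (ω : Fin N → Fin N → ℝ) (hω : ∀ i j, ω i j = 0 ∨ ω i j = 1)
    (n : Fin N → ℝ) (hn : ∀ i, n i = ∑ j, ω i j)
    (O : Fin N → EuclideanSpace ℝ (Fin 3)) (hO : ∀ i, O i = ∑ j, ω i j • V j)
    (w : Fin N → EuclideanSpace ℝ (Fin 3))
    (i : Fin N) (hn0 : 0 < n i) (hO0 : O i ≠ 0) :
    ‖(((‖O i‖ ^ 3)⁻¹ - (n i ^ 3)⁻¹) * ⟪w i, O i⟫) • O i‖ ≤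
        (‖w i‖ / ‖O i‖) * (1 - (‖O i‖ / n i) ^ 3) ∧
      (‖w i‖ / ‖O i‖) * (1 - (‖O i‖ / n i) ^ 3) ≤
        3 * (1 - ‖O i‖ / n i) * (‖w i‖ / ‖O i‖) :=
  zeta4_norm_le_general N V hV ω hω n hn O hO w i
end
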